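/- Let x be a positive integer, and suppose x = d·10^{n-1} for a single digit d ∈ {1,...,9} and some n ≥ 1. Then the round level of x, defined as (last-nonzero-digit contribution)/x, equals 1. Conversely, if x is not of this form, the round level of x is strictly less than 1/2. -/
import Mathlib


theorem stmt_9 (x n : ℕ) (hx : 0 < x) (hn : 1 ≤ n)
    (hlow : 10 ^ (n - 1) ∣ x) (hnz : ¬ 10 ^ n ∣ x) :
    ((∃ d, 1 ≤ d ∧ d ≤ 9 ∧ x = d * 10 ^ (n - 1)) →
        ((x % 10 ^ n : ℕ) : ℝ) / (x : ℝ) = 1) ∧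
    (¬ (∃ d, 1 ≤ d ∧ d ≤ 9 ∧ x = d * 10 ^ (n - 1)) →
        ((x % 10 ^ n : ℕ) : ℝ) / (x : ℝ) < 1 / 2) := by
  obtain ⟨m, hm⟩ := hlow
  have hn10 : (10:ℕ)^n = 10^(n-1) * 10 := by
    rw [← pow_succ, Nat.sub_add_cancel hn]
  have hp : 0 < (10:ℕ)^(n-1) := by positivity
  have hmod : x % 10^n = 10^(n-1) * (m % 10) := by
    rw [hm, hn10, Nat.mul_mod_mul_left]
  have hm10 : ¬ 10 ∣ m := by
    rintro ⟨k, hk⟩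
    exact hnz ⟨k, by rw [hm, hk, hn10]; ring⟩
  constructor
  · rintro ⟨d, hd1, hd9, hxd⟩
    have hlt : x < 10^n := by
      rw [hxd, hn10]
      have : d * 10^(n-1) ≤ 9 * 10^(n-1) := Nat.mul_le_mul_right _ hd9
      nlinarith
    rw [Nat.mod_eq_of_lt hlt]
    field_simp
  · intro hne
    have hm1 : 1 ≤ m := by
      rcases Nat.eq_zero_or_pos m with h|h
      · exfalso; rw [hm, h, mul_zero] at hx; exact lt_irrefl 0 hx
      · exact h
    have hm11 : 11 ≤ m := by
      rcases Nat.lt_or_ge m 11 with h|h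
      · exact absurd ⟨m, hm1, by omega, by rw [hm]; ring⟩ hne
      · exact h
    have key : 2 * (m % 10) < m := by omega
    have hlt : 2 * (x % 10^n) < x := by
      rw [hmod, hm]
      calc 2 * (10^(n-1) * (m % 10)) = 10^(n-1) * (2 * (m % 10)) := by ring
      _ < 10^(n-1) * m := (Nat.mul_lt_mul_left hp).mpr key
    have hxr : (0:ℝ) < x := by exact_mod_cast hx
    rw [div_lt_iff₀ hxr]
    have h2 : ((x % 10^n : ℕ):ℝ) * 2 < x := by exact_mod_cast (by omega : (x % 10^n) * 2 < x)
    linarith
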